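/- A pre-metric group (G,q) is weakly anisotropic if and only if for every prime p the p-primary component G_p of G, equipped with the restriction of q, is weakly anisotropic. -/

import Mathlib

/-- The bicharacter associated with a `kˣ`-valued function `q` on `G`:
`b(g,h) = q(g+h) · q(g)⁻¹ · q(h)⁻¹`. -/
def bchar {k : Type*} [Field k] {G : Type*} [AddCommGroup G] (q : G → kˣ) (g h : G) : kˣ :=
  q (g + h) * (q g)⁻¹ * (q h)⁻¹

/-- `q : G → kˣ` is a quadratic form: `q (-g) = q g` for all `g`, and the associated
function `bchar q` is bimultiplicative. -/
structure IsQuadForm {k : Type*} [Field k] {G : Type*} [AddCommGroup G] (q : G → kˣ) : Prop where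
  map_neg : ∀ g : G, q (-g) = q g
  bchar_add_left : ∀ g₁ g₂ h : G, bchar q (g₁ + g₂) h = bchar q g₁ h * bchar q g₂ h
  bchar_add_right : ∀ g h₁ h₂ : G, bchar q g (h₁ + h₂) = bchar q g h₁ * bchar q g h₂

/-- The Gauss sum `τ⁺(G,q) = ∑_{g ∈ G} q(g)`, as an element of `k`. -/
noncomputable def tauPlus {k : Type*} [Field k] {G : Type*} [AddCommGroup G] (q : G → kˣ) : k :=
  ∑ᶠ g : G, (q g : k)

/-- The Gauss sum `τ⁻(G,q) = ∑_{g ∈ G} q(g)⁻¹`, as an element of `k`. -/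
noncomputable def tauMinus {k : Type*} [Field k] {G : Type*} [AddCommGroup G] (q : G → kˣ) : k :=
  ∑ᶠ g : G, (((q g)⁻¹ : kˣ) : k)

/-- Non-degeneracy of (the bicharacter associated with) `q` : the map
`g ↦ b(g, ·)` from `G` to `Hom(G, kˣ)` is injective. -/
def Nondeg {k : Type*} [Field k] {G : Type*} [AddCommGroup G] (q : G → kˣ) : Prop :=
  Function.Injective fun g : G => fun h : G => bchar q g h

/-- Isomorphism of pre-metric groups: a group isomorphism `φ : G₁ ≃ G₂`
with `q₂ ∘ φ = q₁`. -/
def PMIso {k : Type*} [Field k] {G₁ : Type*} [AddCommGroup G₁] {G₂ : Type*} [AddCommGroup G₂]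
    (q₁ : G₁ → kˣ) (q₂ : G₂ → kˣ) : Prop :=
  ∃ φ : G₁ ≃+ G₂, ∀ g : G₁, q₂ (φ g) = q₁ g

/-- `(G,q)` is weakly anisotropic: it has no nonzero isotropic subgroup stable under
every automorphism of `(G,q)`. -/
def WeaklyAnisotropic {k : Type*} [Field k] {G : Type*} [AddCommGroup G] (q : G → kˣ) : Prop :=
  ∀ H : AddSubgroup G, (∀ h ∈ H, q h = 1) →
    (∀ φ : G ≃+ G, (∀ g : G, q (φ g) = q g) → ∀ h ∈ H, φ h ∈ H) →
    H = ⊥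

/-!
For coprime `a` and `b` the bicharacter pairs `a`-torsion with `b`-torsion trivially, so `q` is
additive along the splitting `G = G_p ⊕ G_{p'}`. Hence every automorphism of `(G_p, q)` extends,
by the identity on `G_{p'}`, to an automorphism of `(G, q)`, while every automorphism of `G`
preserves `G_p`. So a stable isotropic subgroup of `G_p` is one of `G`, and for a stable isotropic
`H ≤ G` each `H ∩ G_p` is stable isotropic in `G_p`; these vanish only if `H` does, because the
`p`-part of `h ∈ H` is an integer multiple of `h`, hence lies in `H ∩ G_p`.
-/

section Bicharacter

variable {k : Type*} [Field k] {G : Type*} [AddCommGroup G] {q : G → kˣ}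

theorem bchar_comm (g h : G) : bchar q g h = bchar q h g := by
  rw [bchar, bchar, add_comm, mul_right_comm]

namespace IsQuadForm

def bcharAddHom (hq : IsQuadForm q) (h : G) : G →+ Additive kˣ :=
  AddMonoidHom.mk' (fun g => .ofMul (bchar q g h)) fun a b =>
    congrArg Additive.ofMul (hq.bchar_add_left a b h)

theorem bchar_nsmul_left (hq : IsQuadForm q) (n : ℕ) (g h : G) :
    bchar q (n • g) h = bchar q g h ^ n :=
  congrArg Additive.toMul (map_nsmul (hq.bcharAddHom h) n g)

theorem bchar_zero_left (hq : IsQuadForm q) (h : G) : bchar q 0 h = 1 := by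
  simpa using hq.bchar_nsmul_left 0 0 h

theorem bchar_eq_one_of_coprime (hq : IsQuadForm q) {a b : ℕ} (hab : a.Coprime b) {g h : G}
    (hg : a • g = 0) (hh : b • h = 0) : bchar q g h = 1 := by
  refine (pow_eq_one_iff_of_coprime hab).1 ⟨?_, ?_⟩
  · rw [← hq.bchar_nsmul_left, hg, hq.bchar_zero_left]
  · rw [bchar_comm, ← hq.bchar_nsmul_left, hh, hq.bchar_zero_left]

theorem map_add_of_coprime (hq : IsQuadForm q) {a b : ℕ} (hab : a.Coprime b) {g h : G}
    (hg : a • g = 0) (hh : b • h = 0) : q (g + h) = q g * q h := by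
  have hb := hq.bchar_eq_one_of_coprime hab hg hh
  rw [bchar, mul_inv_eq_one, mul_inv_eq_iff_eq_mul] at hb
  rw [hb, mul_comm]

end IsQuadForm

end Bicharacter

section Extension

variable {k : Type*} [Field k] {G : Type*} [AddCommGroup G] {K : AddSubgroup G}

def AddEquiv.extendOfRetraction (π : G →+ K) (hπ : ∀ x : K, π x = x) (ψ : K ≃+ K) :
    G ≃+ G :=
  have hπ_extend : ∀ (y : K) (g : G), π (y + (g - π g)) = y := fun y g => by
    rw [map_add, map_sub, hπ, hπ, sub_self, add_zero]
  { toFun g := ψ (π g) + (g - π g)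
    invFun g := ψ.symm (π g) + (g - π g)
    left_inv g := by simp only [hπ_extend, AddEquiv.symm_apply_apply]; abel
    right_inv g := by simp only [hπ_extend, AddEquiv.apply_symm_apply]; abel
    map_add' a b := by simp only [map_add, AddSubgroup.coe_add]; abel }

theorem AddEquiv.extendOfRetraction_apply (π : G →+ K) (hπ : ∀ x : K, π x = x) (ψ : K ≃+ K)
    (g : G) : AddEquiv.extendOfRetraction π hπ ψ g = ψ (π g) + (g - π g) :=
  rfl

variable {q : G → kˣ}

theorem exists_extension_of_retraction (π : G →+ K) (hπ : ∀ x : K, π x = x)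
    (horth : ∀ (x : K) (g : G), q (x + (g - π g)) = q x * q (g - π g))
    (ψ : K ≃+ K) (hψ : ∀ x : K, q (ψ x) = q x) :
    ∃ φ : G ≃+ G, (∀ g : G, q (φ g) = q g) ∧ ∀ x : K, φ x = ψ x := by
  refine ⟨AddEquiv.extendOfRetraction π hπ ψ, fun g => ?_, fun x => ?_⟩
  · rw [AddEquiv.extendOfRetraction_apply, horth, hψ, ← horth, add_sub_cancel]
  · rw [AddEquiv.extendOfRetraction_apply, hπ, sub_self, add_zero]

end Extension

section Primary

variable {G : Type*} [AddCommGroup G]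

def IsPrimaryComponent (p : ℕ) (Gp : AddSubgroup G) : Prop :=
  ∀ g : G, g ∈ Gp ↔ ∃ n : ℕ, p ^ n • g = 0

variable {p : ℕ} {Gp : AddSubgroup G}

theorem IsPrimaryComponent.map_addEquiv (hGp : IsPrimaryComponent p Gp) (φ : G ≃+ G) :
    Gp.map φ.toAddMonoidHom = Gp := by
  ext g
  rw [AddSubgroup.mem_map_equiv, hGp, hGp]
  simp only [← map_nsmul, AddEquiv.map_eq_zero_iff]

theorem IsPrimaryComponent.exists_projection [Finite G] (hp : p.Prime)
    (hGp : IsPrimaryComponent p Gp) :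
    ∃ e : ℤ, ∃ m : ℕ, p.Coprime m ∧ (∀ g : G, e • g ∈ Gp) ∧ (∀ x ∈ Gp, e • x = x) ∧
      ∀ g : G, m • (g - e • g) = 0 := by
  -- `e = v m`, where `|G| = p ^ a * m` with `p ∤ m` and `u p ^ a + v m = 1`.
  obtain ⟨a, m, hpm, hcard⟩ :=
    Nat.exists_eq_pow_mul_and_not_dvd (Nat.card_pos (α := G)).ne' p hp.ne_one
  have hcop : p.Coprime m := (Nat.Prime.coprime_iff_not_dvd hp).2 hpm
  obtain ⟨u, v, huv⟩ : IsCoprime ((p ^ a : ℕ) : ℤ) m :=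
    Nat.isCoprime_iff_coprime.2 (hcop.pow_left a)
  have hcard_smul : ∀ (c : ℤ) (g : G), (c * (p ^ a * m : ℕ)) • g = 0 := fun c g => by
    rw [mul_smul, ← hcard, natCast_zsmul, card_nsmul_eq_zero', smul_zero]
  have hsub : ∀ g : G, g - (v * m) • g = (u * (p ^ a : ℕ)) • g := fun g => by
    rw [eq_sub_of_add_eq huv, sub_smul, one_smul]
  refine ⟨v * m, m, hcop, fun g => (hGp _).2 ⟨a, ?_⟩, fun x hx => ?_, fun g => ?_⟩
  · rw [← natCast_zsmul, smul_smul, ← hcard_smul v g]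
    push_cast; ring_nf
  · obtain ⟨n, hn⟩ := (hGp x).1 hx
    have hdvd : addOrderOf x ∣ p ^ a :=
      ((hcop.pow_left n).coprime_dvd_left (addOrderOf_dvd_of_nsmul_eq_zero hn)).dvd_of_dvd_mul_right
        (hcard ▸ addOrderOf_dvd_natCard x)
    have hPx : ((p ^ a : ℕ) : ℤ) • x = 0 := by
      rw [natCast_zsmul]; exact addOrderOf_dvd_iff_nsmul_eq_zero.1 hdvd
    rw [eq_comm, ← sub_eq_zero, hsub, mul_smul, hPx, smul_zero]
  · rw [hsub, ← natCast_zsmul, smul_smul, ← hcard_smul u g]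
    push_cast; ring_nf

theorem IsPrimaryComponent.exists_extension [Finite G] {k : Type*} [Field k] {q : G → kˣ}
    (hq : IsQuadForm q) (hp : p.Prime) (hGp : IsPrimaryComponent p Gp) (ψ : Gp ≃+ Gp)
    (hψ : ∀ x : Gp, q (ψ x) = q x) :
    ∃ φ : G ≃+ G, (∀ g : G, q (φ g) = q g) ∧ ∀ x : Gp, φ x = ψ x := by
  obtain ⟨e, m, hpm, he_mem, he_id, hm⟩ := hGp.exists_projection hp
  refine exists_extension_of_retraction ((zsmulAddGroupHom e).codRestrict Gp he_mem)
    (fun x => Subtype.ext (he_id x x.2)) (fun x g => ?_) ψ hψ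
  obtain ⟨n, hn⟩ := (hGp x).1 x.2
  exact hq.map_add_of_coprime (hpm.pow_left n) hn (hm g)

end Primary

namespace WeaklyAnisotropic

variable {k : Type*} [Field k] {G : Type*} [AddCommGroup G] {q : G → kˣ} {K : AddSubgroup G}

theorem restrict_of_map_eq (hq : WeaklyAnisotropic q)
    (hK : ∀ φ : G ≃+ G, (∀ g : G, q (φ g) = q g) → K.map φ.toAddMonoidHom = K) :
    WeaklyAnisotropic fun x : K => q x := by
  intro H hiso hstab
  refine (AddSubgroup.map_eq_bot_iff_of_injective H K.subtype_injective).1 (hq _ ?_ ?_)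
  · rintro _ ⟨x, hx, rfl⟩
    exact hiso x hx
  · rintro φ hφ _ ⟨x, hx, rfl⟩
    let ψ : K ≃+ K := (φ.addSubgroupMap K).trans (AddEquiv.addSubgroupCongr (hK φ hφ))
    exact ⟨ψ x, hstab ψ (fun y => hφ y) x hx, rfl⟩

theorem comap_subtype_eq_bot (hK : WeaklyAnisotropic fun x : K => q x)
    (hext : ∀ ψ : K ≃+ K, (∀ x : K, q (ψ x) = q x) →
      ∃ φ : G ≃+ G, (∀ g : G, q (φ g) = q g) ∧ ∀ x : K, φ x = ψ x)
    {H : AddSubgroup G} (hiso : ∀ h ∈ H, q h = 1)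
    (hstab : ∀ φ : G ≃+ G, (∀ g : G, q (φ g) = q g) → ∀ h ∈ H, φ h ∈ H) :
    H.comap K.subtype = ⊥ := by
  refine hK _ (fun x hx => hiso x hx) fun ψ hψ x hx => ?_
  obtain ⟨φ, hφ, hφψ⟩ := hext ψ hψ
  rw [AddSubgroup.mem_comap, AddSubgroup.coe_subtype, ← hφψ]
  exact hstab φ hφ x hx

end WeaklyAnisotropic

theorem weaklyAnisotropic_iff_primary_components_general
    {k : Type*} [Field k]
    {G : Type*} [AddCommGroup G] [Finite G]
    (q : G → kˣ) (hq : IsQuadForm q) :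
    WeaklyAnisotropic q ↔
      ∀ p : ℕ, p.Prime →
        ∀ Gp : AddSubgroup G, (∀ g : G, g ∈ Gp ↔ ∃ n : ℕ, p ^ n • g = 0) →
          WeaklyAnisotropic (fun x : ↥Gp => q (x : G)) := by
  refine ⟨fun hWA p _ Gp hGp =>
    hWA.restrict_of_map_eq fun φ _ => IsPrimaryComponent.map_addEquiv hGp φ, ?_⟩
  intro hcomp H hiso hstab
  refine (AddSubgroup.eq_bot_iff_forall H).2 fun h hh => ?_
  by_contra hne
  obtain ⟨p, hp, hpd⟩ := Nat.exists_prime_and_dvd (mt AddMonoid.addOrderOf_eq_one_iff.1 hne)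
  set Gp := AddCommGroup.primaryComponent G p
  have hGp : IsPrimaryComponent p Gp := fun _ => AddCommGroup.mem_primaryComponent
  have hbot : H.comap Gp.subtype = ⊥ :=
    (hcomp p hp Gp hGp).comap_subtype_eq_bot (hGp.exists_extension hq hp) hiso hstab
  obtain ⟨e, m, hpm, he_mem, -, hm⟩ := hGp.exists_projection hp
  have he : e • h = 0 := by
    have : (⟨e • h, he_mem h⟩ : Gp) ∈ H.comap Gp.subtype := zsmul_mem hh e
    simpa [hbot] using this
  have hmh : m • h = 0 := by simpa [he] using hm h
  exact (Nat.Prime.coprime_iff_not_dvd hp).1 hpm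
    (hpd.trans (addOrderOf_dvd_of_nsmul_eq_zero hmh))

/-- A pre-metric group `(G,q)` is weakly anisotropic iff for every
prime `p` the `p`-primary component of `G`, with the restriction of `q`, is weakly
anisotropic. -/
theorem weaklyAnisotropic_iff_primary_components
    {k : Type*} [Field k] [IsAlgClosed k] [CharZero k]
    {G : Type*} [AddCommGroup G] [Finite G]
    (q : G → kˣ) (hq : IsQuadForm q) :
    WeaklyAnisotropic q ↔
      ∀ p : ℕ, p.Prime →
        ∀ Gp : AddSubgroup G, (∀ g : G, g ∈ Gp ↔ ∃ n : ℕ, p ^ n • g = 0) →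
          WeaklyAnisotropic (fun x : ↥Gp => q (x : G)) :=
  weaklyAnisotropic_iff_primary_components_general q hq
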